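/- Let m ≥ 1 and j ≥ 2m+1 be integers, and let u be a solution of the elliptic Euler–Darboux equation on an open set U ⊆ ℝ² with x + y ≠ 0 on U. Then ∇^m_j u = 0 identically on U. -/

import Mathlib

open scoped ContDiff


/-- Partial derivative of a real-valued function on `ℝ²` in the direction `v`. -/
noncomputable def pdv (v : ℝ × ℝ) (f : ℝ × ℝ → ℝ) : ℝ × ℝ → ℝ := fun p => fderiv ℝ f p v

/-- Partial derivative with respect to the first coordinate (`x`). -/
noncomputable def px : (ℝ × ℝ → ℝ) → ℝ × ℝ → ℝ := pdv (1, 0)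

/-- Partial derivative with respect to the second coordinate (`y`). -/
noncomputable def py : (ℝ × ℝ → ℝ) → ℝ × ℝ → ℝ := pdv (0, 1)

/-- The operator `□̃f = −∂_x f + ∂_y f`. -/
noncomputable def boxT (f : ℝ × ℝ → ℝ) : ℝ × ℝ → ℝ := fun p => -px f p + py f p

/-- The operator `τ̃f = ((x²−2xy−y²)/2)∂_x f + ((x²+2xy−y²)/2)∂_y f + ((x−y)/2)f`. -/
noncomputable def tauT (f : ℝ × ℝ → ℝ) : ℝ × ℝ → ℝ :=
  fun p => ((p.1 ^ 2 - 2 * p.1 * p.2 - p.2 ^ 2) / 2) * px f p +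
    ((p.1 ^ 2 + 2 * p.1 * p.2 - p.2 ^ 2) / 2) * py f p + ((p.1 - p.2) / 2) * f p

/-- `∇^m_0 = □̃^m` and `∇^m_{j+1} = [∇^m_j, τ̃]`. -/
noncomputable def nablamj (m : ℕ) : ℕ → (ℝ × ℝ → ℝ) → ℝ × ℝ → ℝ
  | 0, f => boxT^[m] f
  | j + 1, f => nablamj m j (tauT f) - tauT (nablamj m j f)

/-- `u` is a solution of the elliptic Euler–Darboux equation
`(x+y)(u_xx + u_yy) + u_x + u_y = 0` on `U`. -/
def IsEDSolution (U : Set (ℝ × ℝ)) (u : ℝ × ℝ → ℝ) : Prop :=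
  ContDiffOn ℝ (⊤ : ℕ∞) u U ∧
    ∀ p ∈ U, (p.1 + p.2) * (px (px u) p + py (py u) p) + px u p + py u p = 0

namespace EDAux

/-- `-2σ̃`. -/
noncomputable def sgT (f : ℝ × ℝ → ℝ) : ℝ × ℝ → ℝ :=
  fun p => -2 * p.1 * px f p + -2 * p.2 * py f p + -1 * f p

-- basic pdv calculus
lemma pdv_contDiffAt {f : ℝ × ℝ → ℝ} {p : ℝ × ℝ} (hf : ContDiffAt ℝ ∞ f p) (v : ℝ × ℝ) :
    ContDiffAt ℝ ∞ (pdv v f) p := by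
  have h1 : ContDiffAt ℝ ∞ (fderiv ℝ f) p := hf.fderiv_right (by simp)
  exact (ContinuousLinearMap.apply ℝ ℝ v).contDiff.contDiffAt.comp p h1

lemma pdv_add {f g : ℝ × ℝ → ℝ} {p : ℝ × ℝ} {v : ℝ × ℝ}
    (hf : DifferentiableAt ℝ f p) (hg : DifferentiableAt ℝ g p) :
    pdv v (fun q => f q + g q) p = pdv v f p + pdv v g p := by
  simp [pdv, fderiv_fun_add hf hg]

lemma pdv_mul {f g : ℝ × ℝ → ℝ} {p : ℝ × ℝ} {v : ℝ × ℝ}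
    (hf : DifferentiableAt ℝ f p) (hg : DifferentiableAt ℝ g p) :
    pdv v (fun q => f q * g q) p = f p * pdv v g p + g p * pdv v f p := by
  simp [pdv, fderiv_fun_mul hf hg]

lemma pdv_fst {p v : ℝ × ℝ} : pdv v (fun q : ℝ × ℝ => q.1) p = v.1 := by
  simp [pdv, show (fun q : ℝ × ℝ => q.1) = Prod.fst from rfl, fderiv_fst]

lemma pdv_snd {p v : ℝ × ℝ} : pdv v (fun q : ℝ × ℝ => q.2) p = v.2 := by
  simp [pdv, show (fun q : ℝ × ℝ => q.2) = Prod.snd from rfl, fderiv_snd]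

lemma pdv_const {p v : ℝ × ℝ} {c : ℝ} : pdv v (fun _ : ℝ × ℝ => c) p = 0 := by
  simp [pdv]

lemma pdv_div_const {f : ℝ × ℝ → ℝ} {p v : ℝ × ℝ} {c : ℝ} (hf : DifferentiableAt ℝ f p) :
    pdv v (fun q => f q / c) p = pdv v f p / c := by
  simp only [pdv, div_eq_mul_inv, fderiv_mul_const hf]
  simp; ring

lemma pdv_pdv {f : ℝ × ℝ → ℝ} {p : ℝ × ℝ} (hf : ContDiffAt ℝ ∞ f p) (v w : ℝ × ℝ) :
    pdv v (pdv w f) p = fderiv ℝ (fderiv ℝ f) p v w := by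
  have hc : DifferentiableAt ℝ (fderiv ℝ f) p :=
    (hf.fderiv_right (by simp) : ContDiffAt ℝ ∞ (fderiv ℝ f) p).differentiableAt (by simp)
  rw [show pdv v (pdv w f) p = fderiv ℝ (fun q => (fderiv ℝ f q) w) p v from rfl]
  rw [fderiv_clm_apply hc (differentiableAt_const w)]
  simp

lemma pdv_symm {f : ℝ × ℝ → ℝ} {p : ℝ × ℝ} (hf : ContDiffAt ℝ ∞ f p) (v w : ℝ × ℝ) :
    pdv v (pdv w f) p = pdv w (pdv v f) p := by
  rw [pdv_pdv hf, pdv_pdv hf]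
  exact (hf.isSymmSndFDerivAt (by simp; exact WithTop.coe_le_coe.2 (le_top : (2 : ℕ∞) ≤ ⊤))) v w

-- differentiability of coefficients
lemma diffA {p : ℝ × ℝ} :
    DifferentiableAt ℝ (fun q : ℝ × ℝ => (q.1 ^ 2 - 2 * q.1 * q.2 - q.2 ^ 2) / 2) p := by
  fun_prop

lemma diffB {p : ℝ × ℝ} :
    DifferentiableAt ℝ (fun q : ℝ × ℝ => (q.1 ^ 2 + 2 * q.1 * q.2 - q.2 ^ 2) / 2) p := by
  fun_prop

lemma diffC {p : ℝ × ℝ} : DifferentiableAt ℝ (fun q : ℝ × ℝ => (q.1 - q.2) / 2) p := by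
  fun_prop


lemma pdv_sub {f g : ℝ × ℝ → ℝ} {p v : ℝ × ℝ}
    (hf : DifferentiableAt ℝ f p) (hg : DifferentiableAt ℝ g p) :
    pdv v (fun q => f q - g q) p = pdv v f p - pdv v g p := by
  simp [pdv, fderiv_fun_sub hf hg]

lemma pdv_neg_add {f g : ℝ × ℝ → ℝ} {p v : ℝ × ℝ}
    (hf : DifferentiableAt ℝ f p) (hg : DifferentiableAt ℝ g p) :
    pdv v (fun q => -f q + g q) p = -pdv v f p + pdv v g p := by
  simp [pdv, fderiv_fun_add hf.fun_neg hg, fderiv_fun_neg]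

lemma pdv_const_mul {g : ℝ × ℝ → ℝ} {p v : ℝ × ℝ} {c : ℝ} (hg : DifferentiableAt ℝ g p) :
    pdv v (fun q => c * g q) p = c * pdv v g p := by
  rw [pdv_mul (differentiableAt_const c) hg, pdv_const]
  ring

lemma pdv_x2 {p v : ℝ × ℝ} : pdv v (fun q : ℝ × ℝ => q.1 ^ 2) p = 2 * p.1 * v.1 := by
  have e : (fun q : ℝ × ℝ => q.1 ^ 2) = fun q : ℝ × ℝ => q.1 * q.1 := by funext q; ring
  rw [e, pdv_mul (by fun_prop) (by fun_prop), pdv_fst]; ring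

lemma pdv_y2 {p v : ℝ × ℝ} : pdv v (fun q : ℝ × ℝ => q.2 ^ 2) p = 2 * p.2 * v.2 := by
  have e : (fun q : ℝ × ℝ => q.2 ^ 2) = fun q : ℝ × ℝ => q.2 * q.2 := by funext q; ring
  rw [e, pdv_mul (by fun_prop) (by fun_prop), pdv_snd]; ring

lemma pdv_xy {p v : ℝ × ℝ} :
    pdv v (fun q : ℝ × ℝ => q.1 * q.2) p = p.1 * v.2 + p.2 * v.1 := by
  rw [pdv_mul (by fun_prop) (by fun_prop), pdv_fst, pdv_snd]

-- pdv of the tau coefficients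
lemma pdv_A {p v : ℝ × ℝ} :
    pdv v (fun q : ℝ × ℝ => (q.1 ^ 2 - 2 * q.1 * q.2 - q.2 ^ 2) / 2) p
      = ((2 * p.1 - 2 * p.2) * v.1 + (-2 * p.1 - 2 * p.2) * v.2) / 2 := by
  have e : (fun q : ℝ × ℝ => (q.1 ^ 2 - 2 * q.1 * q.2 - q.2 ^ 2) / 2)
      = fun q : ℝ × ℝ => ((q.1 ^ 2 - 2 * (q.1 * q.2)) - q.2 ^ 2) / 2 := by
    funext q; ring
  rw [e, pdv_div_const (by fun_prop), pdv_sub (by fun_prop) (by fun_prop),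
    pdv_sub (by fun_prop) (by fun_prop), pdv_const_mul (by fun_prop), pdv_x2, pdv_y2, pdv_xy]
  ring

lemma pdv_B {p v : ℝ × ℝ} :
    pdv v (fun q : ℝ × ℝ => (q.1 ^ 2 + 2 * q.1 * q.2 - q.2 ^ 2) / 2) p
      = ((2 * p.1 + 2 * p.2) * v.1 + (2 * p.1 - 2 * p.2) * v.2) / 2 := by
  have e : (fun q : ℝ × ℝ => (q.1 ^ 2 + 2 * q.1 * q.2 - q.2 ^ 2) / 2)
      = fun q : ℝ × ℝ => ((q.1 ^ 2 + 2 * (q.1 * q.2)) - q.2 ^ 2) / 2 := by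
    funext q; ring
  rw [e, pdv_div_const (by fun_prop), pdv_sub (by fun_prop) (by fun_prop),
    pdv_add (by fun_prop) (by fun_prop), pdv_const_mul (by fun_prop), pdv_x2, pdv_y2, pdv_xy]
  ring

lemma pdv_C {p v : ℝ × ℝ} :
    pdv v (fun q : ℝ × ℝ => (q.1 - q.2) / 2) p = (v.1 - v.2) / 2 := by
  rw [pdv_div_const (by fun_prop), pdv_sub (by fun_prop) (by fun_prop), pdv_fst, pdv_snd]

lemma pdv_m2x {p v : ℝ × ℝ} :
    pdv v (fun q : ℝ × ℝ => -2 * q.1) p = -2 * v.1 := by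
  rw [pdv_const_mul (by fun_prop), pdv_fst]

lemma pdv_m2y {p v : ℝ × ℝ} :
    pdv v (fun q : ℝ × ℝ => -2 * q.2) p = -2 * v.2 := by
  rw [pdv_const_mul (by fun_prop), pdv_snd]

noncomputable def Af : ℝ × ℝ → ℝ := fun q => (q.1 ^ 2 - 2 * q.1 * q.2 - q.2 ^ 2) / 2
noncomputable def Bf : ℝ × ℝ → ℝ := fun q => (q.1 ^ 2 + 2 * q.1 * q.2 - q.2 ^ 2) / 2
noncomputable def Cf : ℝ × ℝ → ℝ := fun q => (q.1 - q.2) / 2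

lemma pdv_opT {a b c f : ℝ × ℝ → ℝ} {p v : ℝ × ℝ}
    (ha : DifferentiableAt ℝ a p) (hb : DifferentiableAt ℝ b p) (hc : DifferentiableAt ℝ c p)
    (hfd : DifferentiableAt ℝ f p) (hfx : DifferentiableAt ℝ (px f) p)
    (hfy : DifferentiableAt ℝ (py f) p) :
    pdv v (fun q => a q * px f q + b q * py f q + c q * f q) p
      = a p * pdv v (px f) p + px f p * pdv v a p + b p * pdv v (py f) p +
        py f p * pdv v b p + c p * pdv v f p + f p * pdv v c p := by
  rw [pdv_add ((ha.fun_mul hfx).fun_add (hb.fun_mul hfy)) (hc.fun_mul hfd), pdv_add (ha.fun_mul hfx) (hb.fun_mul hfy),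
    pdv_mul ha hfx, pdv_mul hb hfy, pdv_mul hc hfd]
  ring

section core
variable {f : ℝ × ℝ → ℝ} {p : ℝ × ℝ}

lemma pdv_tau (hf : ContDiffAt ℝ ∞ f p) (v : ℝ × ℝ) :
    pdv v (tauT f) p
      = Af p * pdv v (px f) p + px f p * (((2 * p.1 - 2 * p.2) * v.1 + (-2 * p.1 - 2 * p.2) * v.2) / 2)
        + Bf p * pdv v (py f) p + py f p * (((2 * p.1 + 2 * p.2) * v.1 + (2 * p.1 - 2 * p.2) * v.2) / 2)
        + Cf p * pdv v f p + f p * ((v.1 - v.2) / 2) := by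
  have hfd : DifferentiableAt ℝ f p := hf.differentiableAt (by simp)
  have hfx : DifferentiableAt ℝ (px f) p := (pdv_contDiffAt hf _).differentiableAt (by simp)
  have hfy : DifferentiableAt ℝ (py f) p := (pdv_contDiffAt hf _).differentiableAt (by simp)
  have e : pdv v (tauT f) p = pdv v (fun q => Af q * px f q + Bf q * py f q + Cf q * f q) p := rfl
  have ha : DifferentiableAt ℝ Af p := diffA
  have hb : DifferentiableAt ℝ Bf p := diffB
  have hc : DifferentiableAt ℝ Cf p := diffC
  rw [e, pdv_opT ha hb hc hfd hfx hfy]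
  rw [show pdv v Af p = ((2 * p.1 - 2 * p.2) * v.1 + (-2 * p.1 - 2 * p.2) * v.2) / 2 from pdv_A,
    show pdv v Bf p = ((2 * p.1 + 2 * p.2) * v.1 + (2 * p.1 - 2 * p.2) * v.2) / 2 from pdv_B,
    show pdv v Cf p = (v.1 - v.2) / 2 from pdv_C]

lemma pdv_sg (hf : ContDiffAt ℝ ∞ f p) (v : ℝ × ℝ) :
    pdv v (sgT f) p
      = (-2 * p.1) * pdv v (px f) p + px f p * (-2 * v.1)
        + (-2 * p.2) * pdv v (py f) p + py f p * (-2 * v.2)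
        + (-1) * pdv v f p := by
  have hfd : DifferentiableAt ℝ f p := hf.differentiableAt (by simp)
  have hfx : DifferentiableAt ℝ (px f) p := (pdv_contDiffAt hf _).differentiableAt (by simp)
  have hfy : DifferentiableAt ℝ (py f) p := (pdv_contDiffAt hf _).differentiableAt (by simp)
  have e : pdv v (sgT f) p = pdv v (fun q => (fun q : ℝ × ℝ => -2 * q.1) q * px f q +
      (fun q : ℝ × ℝ => -2 * q.2) q * py f q + (fun _ : ℝ × ℝ => (-1 : ℝ)) q * f q) p := rfl
  rw [e, pdv_opT (by fun_prop) (by fun_prop) (by fun_prop) hfd hfx hfy]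
  rw [show pdv v (fun q : ℝ × ℝ => -2 * q.1) p = -2 * v.1 from pdv_m2x,
    show pdv v (fun q : ℝ × ℝ => -2 * q.2) p = -2 * v.2 from pdv_m2y,
    show pdv v (fun _ : ℝ × ℝ => (-1 : ℝ)) p = 0 from pdv_const]
  ring

lemma pdv_box (hf : ContDiffAt ℝ ∞ f p) (v : ℝ × ℝ) :
    pdv v (boxT f) p = -pdv v (px f) p + pdv v (py f) p := by
  have hfx : DifferentiableAt ℝ (px f) p := (pdv_contDiffAt hf _).differentiableAt (by simp)
  have hfy : DifferentiableAt ℝ (py f) p := (pdv_contDiffAt hf _).differentiableAt (by simp)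
  exact pdv_neg_add hfx hfy

lemma comm_box_tau (hf : ContDiffAt ℝ ∞ f p) :
    boxT (tauT f) p - tauT (boxT f) p = sgT f p := by
  have hsym : pdv (1, 0) (py f) p = pdv (0, 1) (px f) p := pdv_symm hf (1, 0) (0, 1)
  have e1 : boxT (tauT f) p = -pdv (1, 0) (tauT f) p + pdv (0, 1) (tauT f) p := rfl
  have e2 : tauT (boxT f) p = Af p * pdv (1, 0) (boxT f) p + Bf p * pdv (0, 1) (boxT f) p
      + Cf p * (-px f p + py f p) := rfl
  rw [e1, e2, pdv_tau hf, pdv_tau hf, pdv_box hf, pdv_box hf]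
  rw [hsym]
  simp only [sgT, Af, Bf, Cf, px, py]
  ring

lemma comm_sg_tau (hf : ContDiffAt ℝ ∞ f p) :
    sgT (tauT f) p - tauT (sgT f) p = -2 * tauT f p := by
  have hsym : pdv (1, 0) (py f) p = pdv (0, 1) (px f) p := pdv_symm hf (1, 0) (0, 1)
  rw [show sgT (tauT f) p = (-2 * p.1) * pdv (1, 0) (tauT f) p + (-2 * p.2) * pdv (0, 1) (tauT f) p
      + (-1) * tauT f p from rfl]
  rw [show tauT (sgT f) p = Af p * pdv (1, 0) (sgT f) p + Bf p * pdv (0, 1) (sgT f) p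
      + Cf p * sgT f p from rfl]
  rw [pdv_tau hf, pdv_tau hf, pdv_sg hf, pdv_sg hf]
  rw [hsym]
  simp only [sgT, tauT, Af, Bf, Cf, px, py]
  ring

end core
/-- generic first-order operator -/
noncomputable def opF (a b c : ℝ × ℝ → ℝ) (f : ℝ × ℝ → ℝ) : ℝ × ℝ → ℝ :=
  fun q => a q * px f q + b q * py f q + c q * f q

lemma boxT_eq_opF : boxT = opF (fun _ => -1) (fun _ => 1) (fun _ => 0) := by
  funext f q; simp [boxT, opF]

lemma tauT_eq_opF : tauT = opF Af Bf Cf := rfl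

lemma sgT_eq_opF : sgT = opF (fun q => -2 * q.1) (fun q => -2 * q.2) (fun _ => -1) := rfl

section U
variable {U : Set (ℝ × ℝ)}

lemma contDiffAt_on (hU : IsOpen U) {f : ℝ × ℝ → ℝ} {p : ℝ × ℝ} (hf : ContDiffOn ℝ ∞ f U)
    (hp : p ∈ U) : ContDiffAt ℝ ∞ f p := hf.contDiffAt (hU.mem_nhds hp)

lemma contDiffOn_pdv (hU : IsOpen U) {f : ℝ × ℝ → ℝ} (hf : ContDiffOn ℝ ∞ f U) (v : ℝ × ℝ) :
    ContDiffOn ℝ ∞ (pdv v f) U :=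
  hU.contDiffOn_iff.2 fun _ hp => pdv_contDiffAt (contDiffAt_on hU hf hp) v

lemma contDiffOn_opF (hU : IsOpen U) {a b c : ℝ × ℝ → ℝ} (ha : ContDiff ℝ ∞ a)
    (hb : ContDiff ℝ ∞ b) (hc : ContDiff ℝ ∞ c) {f : ℝ × ℝ → ℝ} (hf : ContDiffOn ℝ ∞ f U) :
    ContDiffOn ℝ ∞ (opF a b c f) U := by
  unfold opF
  exact ((ha.contDiffOn.mul (contDiffOn_pdv hU hf _)).add
    (hb.contDiffOn.mul (contDiffOn_pdv hU hf _))).add (hc.contDiffOn.mul hf)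

lemma pdv_congrOn (hU : IsOpen U) {f g : ℝ × ℝ → ℝ} {p : ℝ × ℝ} (h : Set.EqOn f g U)
    (hp : p ∈ U) (v : ℝ × ℝ) : pdv v f p = pdv v g p := by
  unfold pdv
  rw [Filter.EventuallyEq.fderiv_eq (Filter.eventuallyEq_of_mem (hU.mem_nhds hp) h)]

lemma opF_congrOn (hU : IsOpen U) {a b c f g : ℝ × ℝ → ℝ} (h : Set.EqOn f g U) :
    Set.EqOn (opF a b c f) (opF a b c g) U := by
  intro p hp
  unfold opF
  rw [show px f p = px g p from pdv_congrOn hU h hp _,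
    show py f p = py g p from pdv_congrOn hU h hp _, h hp]

lemma opF_addOn (hU : IsOpen U) {a b c f g : ℝ × ℝ → ℝ} {p : ℝ × ℝ} (hf : ContDiffOn ℝ ∞ f U)
    (hg : ContDiffOn ℝ ∞ g U) (hp : p ∈ U) :
    opF a b c (f + g) p = opF a b c f p + opF a b c g p := by
  have hfd : DifferentiableAt ℝ f p := (contDiffAt_on hU hf hp).differentiableAt (by simp)
  have hgd : DifferentiableAt ℝ g p := (contDiffAt_on hU hg hp).differentiableAt (by simp)
  have e1 : px (f + g) p = px f p + px g p := pdv_add hfd hgd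
  have e2 : py (f + g) p = py f p + py g p := pdv_add hfd hgd
  have e3 : (f + g) p = f p + g p := rfl
  unfold opF
  rw [e1, e2, e3]; ring

lemma pdv_smul {f : ℝ × ℝ → ℝ} {p v : ℝ × ℝ} {r : ℝ} (hf : DifferentiableAt ℝ f p) :
    pdv v (r • f) p = r * pdv v f p := by
  show fderiv ℝ (fun q => r • f q) p v = r * fderiv ℝ f p v
  rw [fderiv_fun_const_smul hf r]; simp

lemma opF_smulOn (hU : IsOpen U) {a b c f : ℝ × ℝ → ℝ} {p : ℝ × ℝ} {r : ℝ}
    (hf : ContDiffOn ℝ ∞ f U) (hp : p ∈ U) : opF a b c (r • f) p = r * opF a b c f p := by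
  have hfd : DifferentiableAt ℝ f p := (contDiffAt_on hU hf hp).differentiableAt (by simp)
  have e1 : px (r • f) p = r * px f p := pdv_smul hfd
  have e2 : py (r • f) p = r * py f p := pdv_smul hfd
  have e3 : (r • f) p = r * f p := rfl
  unfold opF
  rw [e1, e2, e3]; ring

/-- the submodule of functions smooth on `U` -/
noncomputable def SA (U : Set (ℝ × ℝ)) : Submodule ℝ (ℝ × ℝ → ℝ) where
  carrier := {f | ContDiffOn ℝ ∞ f U}
  add_mem' := fun hf hg => hf.add hg
  zero_mem' := by
    show ContDiffOn ℝ ∞ (fun _ => (0 : ℝ)) U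
    exact contDiffOn_const
  smul_mem' := fun r f hf => by
    show ContDiffOn ℝ ∞ (r • f) U
    exact hf.const_smul r

/-- the submodule of those vanishing on `U` -/
noncomputable def SZ (U : Set (ℝ × ℝ)) : Submodule ℝ ↥(SA U) where
  carrier := {f | ∀ p ∈ U, (f : ℝ × ℝ → ℝ) p = 0}
  add_mem' := by
    intro f g hf hg p hp
    show (f : ℝ × ℝ → ℝ) p + (g : ℝ × ℝ → ℝ) p = 0
    rw [hf p hp, hg p hp, add_zero]
  zero_mem' := fun p _ => rfl
  smul_mem' := by
    intro r f hf p hp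
    show r * (f : ℝ × ℝ → ℝ) p = 0
    rw [hf p hp, mul_zero]

noncomputable abbrev MU (U : Set (ℝ × ℝ)) := ↥(SA U) ⧸ SZ U

noncomputable def mkS {U : Set (ℝ × ℝ)} (f : ℝ × ℝ → ℝ) (hf : ContDiffOn ℝ ∞ f U) : MU U :=
  Submodule.Quotient.mk ⟨f, hf⟩

lemma mkS_eq_iff {f g : ℝ × ℝ → ℝ} {hf : ContDiffOn ℝ ∞ f U} {hg : ContDiffOn ℝ ∞ g U} :
    mkS f hf = mkS g hg ↔ ∀ p ∈ U, f p = g p := by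
  rw [mkS, mkS, Submodule.Quotient.eq]
  constructor
  · intro h p hp
    have := h p hp
    simpa [sub_eq_zero] using this
  · intro h p hp
    show f p - g p = 0
    rw [h p hp, sub_self]

lemma mkS_eq_zero_iff {f : ℝ × ℝ → ℝ} {hf : ContDiffOn ℝ ∞ f U} :
    mkS f hf = 0 ↔ ∀ p ∈ U, f p = 0 := by
  rw [mkS, Submodule.Quotient.mk_eq_zero]
  exact Iff.rfl

lemma mkS_add {f g : ℝ × ℝ → ℝ} {hf : ContDiffOn ℝ ∞ f U} {hg : ContDiffOn ℝ ∞ g U} :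
    mkS (f + g) (hf.add hg) = mkS f hf + mkS g hg := rfl

lemma mkS_sub {f g : ℝ × ℝ → ℝ} {hf : ContDiffOn ℝ ∞ f U} {hg : ContDiffOn ℝ ∞ g U} :
    mkS (f - g) (hf.sub hg) = mkS f hf - mkS g hg := rfl

lemma mkS_smul {f : ℝ × ℝ → ℝ} {hf : ContDiffOn ℝ ∞ f U} {r : ℝ} :
    mkS (r • f) (hf.const_smul r) = r • mkS f hf := rfl

/-- the endomorphism of `MU` induced by `opF a b c` -/
noncomputable def opE (hU : IsOpen U) (a b c : ℝ × ℝ → ℝ) (ha : ContDiff ℝ ∞ a)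
    (hb : ContDiff ℝ ∞ b) (hc : ContDiff ℝ ∞ c) : Module.End ℝ (MU U) := by
  refine Submodule.liftQ _ ?_ ?_
  · refine
      { toFun := fun f => mkS (opF a b c f) (contDiffOn_opF hU ha hb hc f.2)
        map_add' := ?_, map_smul' := ?_ }
    · intro f g
      rw [← mkS_add, mkS_eq_iff]
      intro p hp
      exact opF_addOn hU f.2 g.2 hp
    · intro r f
      show mkS (opF a b c ((r • f : ↥(SA U)) : ℝ × ℝ → ℝ)) _ = r • mkS (opF a b c ↑f) _
      rw [← mkS_smul, mkS_eq_iff]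
      intro p hp
      exact opF_smulOn hU f.2 hp
  · intro f hf
    rw [LinearMap.mem_ker, LinearMap.coe_mk, AddHom.coe_mk, mkS_eq_zero_iff]
    intro p hp
    have h0 : Set.EqOn (f : ℝ × ℝ → ℝ) (fun _ => 0) U := fun q hq => hf q hq
    rw [opF_congrOn hU (a := a) (b := b) (c := c) h0 hp]
    unfold opF
    rw [show px (fun _ : ℝ × ℝ => (0 : ℝ)) p = 0 from pdv_const,
      show py (fun _ : ℝ × ℝ => (0 : ℝ)) p = 0 from pdv_const]
    ring

lemma opE_mk (hU : IsOpen U) {a b c : ℝ × ℝ → ℝ} {ha : ContDiff ℝ ∞ a} {hb : ContDiff ℝ ∞ b}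
    {hc : ContDiff ℝ ∞ c} {f : ℝ × ℝ → ℝ} {hf : ContDiffOn ℝ ∞ f U} :
    opE hU a b c ha hb hc (mkS f hf) = mkS (opF a b c f) (contDiffOn_opF hU ha hb hc hf) :=
  rfl

-- free-proof restatements
lemma mkS_sub' {f g h : ℝ × ℝ → ℝ} {hf : ContDiffOn ℝ ∞ f U} {hg : ContDiffOn ℝ ∞ g U}
    {hh : ContDiffOn ℝ ∞ h U} (e : h = f - g) : mkS h hh = mkS f hf - mkS g hg := by
  subst e; rfl

-- coefficient smoothness
lemma smoothAf : ContDiff ℝ ∞ Af := by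
  unfold Af; simp only [div_eq_mul_inv]; fun_prop
lemma smoothBf : ContDiff ℝ ∞ Bf := by
  unfold Bf; simp only [div_eq_mul_inv]; fun_prop
lemma smoothCf : ContDiff ℝ ∞ Cf := by
  unfold Cf; simp only [div_eq_mul_inv]; fun_prop

noncomputable def boxE (hU : IsOpen U) : Module.End ℝ (MU U) :=
  opE hU (fun _ => -1) (fun _ => 1) (fun _ => 0) contDiff_const contDiff_const contDiff_const

noncomputable def tauE (hU : IsOpen U) : Module.End ℝ (MU U) :=
  opE hU Af Bf Cf smoothAf smoothBf smoothCf

noncomputable def sgE (hU : IsOpen U) : Module.End ℝ (MU U) :=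
  opE hU (fun q => -2 * q.1) (fun q => -2 * q.2) (fun _ => -1) (by fun_prop) (by fun_prop)
    (by fun_prop)

lemma box_smoothOn (hU : IsOpen U) {f : ℝ × ℝ → ℝ} (hf : ContDiffOn ℝ ∞ f U) :
    ContDiffOn ℝ ∞ (boxT f) U := by
  rw [boxT_eq_opF]; exact contDiffOn_opF hU contDiff_const contDiff_const contDiff_const hf

lemma tau_smoothOn (hU : IsOpen U) {f : ℝ × ℝ → ℝ} (hf : ContDiffOn ℝ ∞ f U) :
    ContDiffOn ℝ ∞ (tauT f) U := contDiffOn_opF hU smoothAf smoothBf smoothCf hf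

lemma sg_smoothOn (hU : IsOpen U) {f : ℝ × ℝ → ℝ} (hf : ContDiffOn ℝ ∞ f U) :
    ContDiffOn ℝ ∞ (sgT f) U :=
  contDiffOn_opF hU (a := fun q => -2 * q.1) (b := fun q => -2 * q.2) (c := fun _ => -1)
    (by fun_prop) (by fun_prop) (by fun_prop) hf

lemma boxE_mk (hU : IsOpen U) {f : ℝ × ℝ → ℝ} {hf : ContDiffOn ℝ ∞ f U}
    (h' : ContDiffOn ℝ ∞ (boxT f) U) : boxE hU (mkS f hf) = mkS (boxT f) h' := by
  rw [boxE, opE_mk, mkS_eq_iff]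
  intro p hp
  rw [boxT_eq_opF]

lemma tauE_mk (hU : IsOpen U) {f : ℝ × ℝ → ℝ} {hf : ContDiffOn ℝ ∞ f U}
    (h' : ContDiffOn ℝ ∞ (tauT f) U) : tauE hU (mkS f hf) = mkS (tauT f) h' := by
  rw [tauE, opE_mk, mkS_eq_iff]
  intro p hp
  rw [tauT_eq_opF]

lemma sgE_mk (hU : IsOpen U) {f : ℝ × ℝ → ℝ} {hf : ContDiffOn ℝ ∞ f U}
    (h' : ContDiffOn ℝ ∞ (sgT f) U) : sgE hU (mkS f hf) = mkS (sgT f) h' := by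
  rw [sgE, opE_mk, mkS_eq_iff]
  intro p hp
  rw [sgT_eq_opF]

lemma rel1 (hU : IsOpen U) : boxE hU * tauE hU - tauE hU * boxE hU = sgE hU := by
  apply LinearMap.ext
  intro x
  obtain ⟨g, rfl⟩ := Submodule.Quotient.mk_surjective _ x
  have hg : ContDiffOn ℝ ∞ g.1 U := g.2
  show (boxE hU * tauE hU - tauE hU * boxE hU) (mkS g.1 hg) = sgE hU (mkS g.1 hg)
  rw [LinearMap.sub_apply, Module.End.mul_apply, Module.End.mul_apply,
    tauE_mk hU (tau_smoothOn hU g.2), boxE_mk hU (box_smoothOn hU g.2),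
    boxE_mk hU (box_smoothOn hU (tau_smoothOn hU g.2)),
    tauE_mk hU (tau_smoothOn hU (box_smoothOn hU g.2)),
    sgE_mk hU (sg_smoothOn hU g.2),
    ← mkS_sub' (hf := box_smoothOn hU (tau_smoothOn hU g.2))
      (hg := tau_smoothOn hU (box_smoothOn hU g.2))
      (hh := (box_smoothOn hU (tau_smoothOn hU g.2)).sub
        (tau_smoothOn hU (box_smoothOn hU g.2))) rfl,
    mkS_eq_iff]
  intro p hp
  exact comm_box_tau (contDiffAt_on hU g.2 hp)

lemma rel2 (hU : IsOpen U) : sgE hU * tauE hU - tauE hU * sgE hU = (-2 : ℝ) • tauE hU := by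
  apply LinearMap.ext
  intro x
  obtain ⟨g, rfl⟩ := Submodule.Quotient.mk_surjective _ x
  have hg : ContDiffOn ℝ ∞ g.1 U := g.2
  show (sgE hU * tauE hU - tauE hU * sgE hU) (mkS g.1 hg) = ((-2 : ℝ) • tauE hU) (mkS g.1 hg)
  rw [LinearMap.sub_apply, Module.End.mul_apply, Module.End.mul_apply, LinearMap.smul_apply,
    tauE_mk hU (tau_smoothOn hU g.2), sgE_mk hU (sg_smoothOn hU g.2),
    sgE_mk hU (sg_smoothOn hU (tau_smoothOn hU g.2)),
    tauE_mk hU (tau_smoothOn hU (sg_smoothOn hU g.2)),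
    ← mkS_sub' (hf := sg_smoothOn hU (tau_smoothOn hU g.2))
      (hg := tau_smoothOn hU (sg_smoothOn hU g.2))
      (hh := (sg_smoothOn hU (tau_smoothOn hU g.2)).sub
        (tau_smoothOn hU (sg_smoothOn hU g.2))) rfl,
    ← mkS_smul (hf := tau_smoothOn hU g.2), mkS_eq_iff]
  intro p hp
  have e2 : ((-2 : ℝ) • tauT g.1) p = -2 * tauT g.1 p := rfl
  rw [e2]
  exact comm_sg_tau (contDiffAt_on hU g.2 hp)

end U

section ringlemmas
variable {R : Type*} [Ring R]

/-- the operator `X ↦ XF - FX` -/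
def dtau (F : R) : R → R := fun X => X * F - F * X

lemma dtau_zero (F : R) : dtau F 0 = 0 := by simp [dtau]

lemma dtau_add (F X Y : R) : dtau F (X + Y) = dtau F X + dtau F Y := by
  simp only [dtau]; noncomm_ring

lemma dtau_mul (F X Y : R) : dtau F (X * Y) = X * dtau F Y + dtau F X * Y := by
  simp only [dtau]; noncomm_ring

lemma iter_dtau_zero (F : R) (n : ℕ) : (dtau F)^[n] 0 = 0 :=
  Function.iterate_fixed (dtau_zero F) n

lemma iter_dtau_add (F : R) : ∀ (n : ℕ) (X Y : R),
    (dtau F)^[n] (X + Y) = (dtau F)^[n] X + (dtau F)^[n] Y := by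
  intro n
  induction n with
  | zero => intro X Y; rfl
  | succ n ih =>
    intro X Y
    rw [Function.iterate_succ_apply, Function.iterate_succ_apply, Function.iterate_succ_apply,
      dtau_add, ih]

lemma dtau_leibniz (F : R) : ∀ (a b : ℕ) (X Y : R), (dtau F)^[a] X = 0 → (dtau F)^[b] Y = 0 →
    (dtau F)^[a + b - 1] (X * Y) = 0 := by
  intro a
  induction a with
  | zero =>
    intro b X Y hX hY
    have : X = 0 := hX
    rw [this, zero_mul]
    exact iter_dtau_zero F _
  | succ a iha =>
    intro b
    induction b with
    | zero =>
      intro X Y hX hY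
      have : Y = 0 := hY
      rw [this, mul_zero]
      exact iter_dtau_zero F _
    | succ b ihb =>
      intro X Y hX hY
      have e : a + 1 + (b + 1) - 1 = (a + b) + 1 := by omega
      rw [e, Function.iterate_succ_apply, dtau_mul, iter_dtau_add]
      have h1 : (dtau F)^[a + b] (X * dtau F Y) = 0 := by
        have e2 : a + 1 + b - 1 = a + b := by omega
        have := ihb X (dtau F Y) hX (by rw [← Function.iterate_succ_apply]; exact hY)
        rwa [e2] at this
      have h2 : (dtau F)^[a + b] (dtau F X * Y) = 0 := by
        have e2 : a + (b + 1) - 1 = a + b := by omega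
        have := iha (b + 1) (dtau F X) Y (by rw [← Function.iterate_succ_apply]; exact hX) hY
        rwa [e2] at this
      rw [h1, h2, add_zero]

lemma dtau_pow_vanish (F E : R) (h3 : (dtau F)^[3] E = 0) :
    ∀ m : ℕ, (dtau F)^[2 * m + 1] (E ^ m) = 0 := by
  intro m
  induction m with
  | zero =>
    have e : 2 * 0 + 1 = 1 := by norm_num
    rw [e, pow_zero, Function.iterate_one]
    simp [dtau]
  | succ m ih =>
    have key := dtau_leibniz F 3 (2 * m + 1) E (E ^ m) h3 ih
    have e : 3 + (2 * m + 1) - 1 = 2 * (m + 1) + 1 := by omega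
    rw [e] at key
    rw [show E ^ (m + 1) = E * E ^ m from by rw [pow_succ']]
    exact key

lemma dtau_vanish (F E : R) (h3 : (dtau F)^[3] E = 0) (m j : ℕ) (hj : 2 * m + 1 ≤ j) :
    (dtau F)^[j] (E ^ m) = 0 := by
  rw [show j = (j - (2 * m + 1)) + (2 * m + 1) from by omega, Function.iterate_add_apply,
    dtau_pow_vanish F E h3 m, iter_dtau_zero]

end ringlemmas

section link
variable {U : Set (ℝ × ℝ)}

lemma d3 (hU : IsOpen U) : (dtau (tauE hU))^[3] (boxE hU) = 0 := by
  have e1 : dtau (tauE hU) (boxE hU) = sgE hU := rel1 hU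
  have e2 : dtau (tauE hU) (sgE hU) = (-2 : ℝ) • tauE hU := rel2 hU
  have e3 : dtau (tauE hU) ((-2 : ℝ) • tauE hU) = 0 := by
    show ((-2 : ℝ) • tauE hU) * tauE hU - tauE hU * ((-2 : ℝ) • tauE hU) = 0
    rw [smul_mul_assoc, mul_smul_comm, sub_self]
  show dtau (tauE hU) (dtau (tauE hU) (dtau (tauE hU) (boxE hU))) = 0
  rw [e1, e2, e3]

lemma box_iter_smoothOn (hU : IsOpen U) : ∀ (k : ℕ) (f : ℝ × ℝ → ℝ),
    ContDiffOn ℝ ∞ f U → ContDiffOn ℝ ∞ (boxT^[k] f) U := by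
  intro k
  induction k with
  | zero => intro f hf; exact hf
  | succ k ih =>
    intro f hf
    rw [Function.iterate_succ_apply]
    exact ih _ (box_smoothOn hU hf)

lemma nabla_smoothOn (hU : IsOpen U) (m : ℕ) : ∀ (j : ℕ) (f : ℝ × ℝ → ℝ),
    ContDiffOn ℝ ∞ f U → ContDiffOn ℝ ∞ (nablamj m j f) U := by
  intro j
  induction j with
  | zero => intro f hf; exact box_iter_smoothOn hU m f hf
  | succ j ih =>
    intro f hf
    exact (ih (tauT f) (tau_smoothOn hU hf)).sub (tau_smoothOn hU (ih f hf))

lemma box_iter_mk (hU : IsOpen U) : ∀ (k : ℕ) (f : ℝ × ℝ → ℝ) (hf : ContDiffOn ℝ ∞ f U)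
    (h' : ContDiffOn ℝ ∞ (boxT^[k] f) U),
    mkS (boxT^[k] f) h' = ((boxE hU) ^ k) (mkS f hf) := by
  intro k
  induction k with
  | zero =>
    intro f hf h'
    rw [pow_zero]
    rfl
  | succ k ih =>
    intro f hf h'
    have e : boxT^[k + 1] f = boxT^[k] (boxT f) := Function.iterate_succ_apply _ _ _
    calc mkS (boxT^[k + 1] f) h'
        = mkS (boxT^[k] (boxT f)) (by rw [← e]; exact h') := by
          rw [mkS_eq_iff]; intro p hp; rw [e]
      _ = (boxE hU ^ k) (mkS (boxT f) (box_smoothOn hU hf)) :=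
          ih (boxT f) (box_smoothOn hU hf) _
      _ = (boxE hU ^ k) (boxE hU (mkS f hf)) := by
          rw [boxE_mk hU (box_smoothOn hU hf)]
      _ = (boxE hU ^ (k + 1)) (mkS f hf) := by
          rw [pow_succ, Module.End.mul_apply]

lemma nabla_mk (hU : IsOpen U) (m : ℕ) : ∀ (j : ℕ) (f : ℝ × ℝ → ℝ) (hf : ContDiffOn ℝ ∞ f U)
    (h' : ContDiffOn ℝ ∞ (nablamj m j f) U),
    mkS (nablamj m j f) h' = (dtau (tauE hU))^[j] ((boxE hU) ^ m) (mkS f hf) := by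
  intro j
  induction j with
  | zero => intro f hf h'; exact box_iter_mk hU m f hf h'
  | succ j ih =>
    intro f hf h'
    have hτ : ContDiffOn ℝ ∞ (tauT f) U := tau_smoothOn hU hf
    have hnj : ContDiffOn ℝ ∞ (nablamj m j f) U := nabla_smoothOn hU m j f hf
    have hnjτ : ContDiffOn ℝ ∞ (nablamj m j (tauT f)) U := nabla_smoothOn hU m j (tauT f) hτ
    have e1 : mkS (nablamj m (j + 1) f) h'
        = mkS (nablamj m j (tauT f)) hnjτ - mkS (tauT (nablamj m j f)) (tau_smoothOn hU hnj) :=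
      mkS_sub' rfl
    rw [e1, ih (tauT f) hτ hnjτ,
      show mkS (tauT (nablamj m j f)) (tau_smoothOn hU hnj)
        = tauE hU (mkS (nablamj m j f) hnj) from (tauE_mk hU _).symm,
      ih f hf hnj,
      show mkS (tauT f) hτ = tauE hU (mkS f hf) from (tauE_mk hU _).symm,
      Function.iterate_succ_apply']
    show _ = ((dtau (tauE hU))^[j] (boxE hU ^ m) * tauE hU
        - tauE hU * (dtau (tauE hU))^[j] (boxE hU ^ m)) (mkS f hf)
    rw [LinearMap.sub_apply, Module.End.mul_apply, Module.End.mul_apply]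

end link
end EDAux

/-- If `u` solves the elliptic Euler–Darboux equation and `j ≥ 2m+1`, then `∇^m_j u = 0`. -/
theorem nablamj_vanishes_on_solutions (m j : ℕ) (hm : 1 ≤ m) (hj : 2 * m + 1 ≤ j)
    (U : Set (ℝ × ℝ)) (hU : IsOpen U) (hne : ∀ p ∈ U, p.1 + p.2 ≠ 0)
    (u : ℝ × ℝ → ℝ) (hu : IsEDSolution U u) :
    ∀ p ∈ U, nablamj m j u p = 0 := by
  intro p hp
  have hsm : ContDiffOn ℝ ∞ u U := hu.1.of_le (by simp)
  have h' := EDAux.nabla_smoothOn hU m j u hsm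
  have hmk := EDAux.nabla_mk hU m j u hsm h'
  rw [EDAux.dtau_vanish (EDAux.tauE hU) (EDAux.boxE hU) (EDAux.d3 hU) m j hj] at hmk
  rw [LinearMap.zero_apply] at hmk
  exact (EDAux.mkS_eq_zero_iff).1 hmk p hp
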